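/- Consider sequences p = pₙ, m = mₙ, r = rₙ of positive integers with n > p + m, p ≥ r and m ≤ r, satisfying n − p → ∞, r → ∞, m/(n−p) → 0 and m/(n+r−p) → 0. Fix a real number s and set hₙ = 2s/(n·σₙ). Define the convergent series R_{n,1} = Σ_{k=3}^{∞} (−1)^{k+1}·(n·hₙ)^k/(k·(n+r−p)^k) and R_{n,2} = Σ_{k=3}^{∞} (−1)^{k+1}·(n·hₙ)^k/(k·(n−p)^k). Then, as n → ∞, −(m(n+r−p)/2)·R_{n,1} + (m(n−p)/2)·R_{n,2} → 0. -/

import Mathlib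

/-!
Write `b = n - p`, `c = b + r`, `x = n hₙ` and `q = |x| / b`. Termwise,
`b R(x, b) - c R(x, c) = Σ (-1)^(k+1) (x^k / k) (b^(1-k) - c^(1-k))`, and
`b^(1-k) - c^(1-k) ≤ (k - 1) r / (c b^(k-1))`, so the difference in the theorem is at most
`(m r b / 2c) q³ / (1 - q)`. From `log y ≥ 1 - 1/y` one gets `σₙ² ≥ 2 m r / (b c)`, which
turns this into the bound `s² q / (1 - q)`; and `q² ≤ 2 s² (1/r + 1/b) → 0`.
-/

open Filter

/-- `σₙ²` of the paper. -/
noncomputable def sigmaSqN (p m r : ℕ → ℕ) (n : ℕ) : ℝ :=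
  2 * Real.log ((((n : ℝ) + r n - p n - m n) * ((n : ℝ) - p n)) /
      ((((n : ℝ) - p n - m n)) * ((n : ℝ) + r n - p n)))

/-- `hₙ = 2s/(n σₙ)`. -/
noncomputable def hN (p m r : ℕ → ℕ) (s : ℝ) (n : ℕ) : ℝ :=
  2 * s / ((n : ℝ) * Real.sqrt (sigmaSqN p m r n))

/-- The remainder series `R = Σ_{k=3}^∞ (−1)^{k+1} x^k/(k b^k)` (with `x = n hₙ` and
`b = n+r−p` or `b = n−p`), written as a `tsum` over the shifted index. -/
noncomputable def remainderR (x b : ℝ) : ℝ :=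
  ∑' k : ℕ, (-1 : ℝ) ^ ((k + 3) + 1) * x ^ (k + 3) / (((k + 3) : ℝ) * b ^ (k + 3))

open Real

noncomputable def remainderTerm (x b : ℝ) (k : ℕ) : ℝ :=
  (-1 : ℝ) ^ ((k + 3) + 1) * x ^ (k + 3) / (((k + 3) : ℝ) * b ^ (k + 3))

theorem remainderR_eq_tsum (x b : ℝ) : remainderR x b = ∑' k, remainderTerm x b k := rfl

theorem inv_pow_sub_inv_pow_le {b c : ℝ} (hb : 0 < b) (hbc : b ≤ c) (k : ℕ) :
    (b ^ (k + 1))⁻¹ - (c ^ (k + 1))⁻¹ ≤ (k + 1) * (c - b) / (c * b ^ (k + 1)) := by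
  have hc : 0 < c := hb.trans_le hbc
  have hpow : c ^ (k + 1) - b ^ (k + 1) ≤ (c - b) * (k + 1) * c ^ k := by
    have h := abs_pow_sub_pow_le c b (k + 1)
    rwa [abs_of_nonneg (sub_nonneg.2 (pow_le_pow_left₀ hb.le hbc _)),
      abs_of_nonneg (sub_nonneg.2 hbc), max_eq_left (by rwa [abs_of_pos hb, abs_of_pos hc]),
      abs_of_pos hc, Nat.add_sub_cancel, Nat.cast_succ] at h
  calc (b ^ (k + 1))⁻¹ - (c ^ (k + 1))⁻¹
      = (c ^ (k + 1) - b ^ (k + 1)) / (c ^ (k + 1) * b ^ (k + 1)) := by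
        field_simp
    _ ≤ (c - b) * (k + 1) * c ^ k / (c ^ (k + 1) * b ^ (k + 1)) := by gcongr
    _ = (k + 1) * (c - b) / (c * b ^ (k + 1)) := by
        field_simp
        ring

section remainder

variable {x b c : ℝ}

theorem abs_remainderTerm_le (hb : 0 < b) (k : ℕ) :
    |remainderTerm x b k| ≤ (|x| / b) ^ (k + 3) := by
  simp only [remainderTerm, abs_div, abs_mul, abs_pow, abs_neg, abs_one, one_pow, one_mul]
  rw [abs_of_pos (by positivity : (0 : ℝ) < k + 3), abs_of_pos hb, div_pow]
  gcongr
  exact le_mul_of_one_le_left (by positivity) (by linarith [(k.cast_nonneg : (0 : ℝ) ≤ k)])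

theorem summable_remainderTerm (hb : 0 < b) (hq : |x| / b < 1) :
    Summable (remainderTerm x b) :=
  .of_norm_bounded ((summable_geometric_of_lt_one (by positivity) hq).comp_injective
    (add_left_injective 3)) (abs_remainderTerm_le hb)

theorem abs_mul_remainderTerm_sub_le (hb : 0 < b) (hbc : b ≤ c) (k : ℕ) :
    |b * remainderTerm x b k - c * remainderTerm x c k|
      ≤ (c - b) * b / c * (|x| / b) ^ (k + 3) := by
  have hk : (0 : ℝ) < k + 3 := by positivity
  have hc : 0 < c := hb.trans_le hbc
  have hsplit : b * remainderTerm x b k - c * remainderTerm x c k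
      = (-1) ^ (k + 4) * (x ^ (k + 3) / (k + 3)) * ((b ^ (k + 2))⁻¹ - (c ^ (k + 2))⁻¹) := by
    simp only [remainderTerm]
    field_simp
    ring
  have hdiff := inv_pow_sub_inv_pow_le hb hbc (k + 1)
  push_cast at hdiff
  rw [hsplit, abs_mul, abs_mul, abs_pow, abs_neg, abs_one, one_pow, one_mul, abs_div, abs_pow,
    abs_of_pos hk,
    abs_of_nonneg (sub_nonneg.2 (inv_anti₀ (pow_pos hb _) (pow_le_pow_left₀ hb.le hbc _)))]
  calc |x| ^ (k + 3) / (k + 3) * ((b ^ (k + 2))⁻¹ - (c ^ (k + 2))⁻¹)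
      ≤ |x| ^ (k + 3) / (k + 3) * ((k + 1 + 1) * (c - b) / (c * b ^ (k + 2))) := by gcongr
    _ = (k + 2) / (k + 3) * ((c - b) * b / c * (|x| / b) ^ (k + 3)) := by
        rw [div_pow, pow_succ b (k + 2)]
        field_simp
        ring
    _ ≤ (c - b) * b / c * (|x| / b) ^ (k + 3) :=
        mul_le_of_le_one_left (by have := sub_nonneg.2 hbc; positivity)
          ((div_le_one hk).2 (by linarith))

theorem abs_mul_remainderR_sub_le (hb : 0 < b) (hbc : b ≤ c) (hq : |x| / b < 1) :
    |b * remainderR x b - c * remainderR x c|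
      ≤ (c - b) * b / c * ((|x| / b) ^ 3 / (1 - |x| / b)) := by
  have hc : 0 < c := hb.trans_le hbc
  have hqc : |x| / c < 1 := (div_le_div_of_nonneg_left (abs_nonneg x) hb hbc).trans_lt hq
  have hgeom : HasSum (fun k : ℕ ↦ (c - b) * b / c * (|x| / b) ^ (k + 3))
      ((c - b) * b / c * ((|x| / b) ^ 3 / (1 - |x| / b))) := by
    have h := (hasSum_geometric_of_lt_one (by positivity) hq).mul_left ((|x| / b) ^ 3)
    simpa only [← pow_add, add_comm 3, div_eq_mul_inv] using h.mul_left ((c - b) * b / c)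
  rw [remainderR_eq_tsum, remainderR_eq_tsum, ← tsum_mul_left, ← tsum_mul_left,
    ← Summable.tsum_sub ((summable_remainderTerm hb hq).mul_left b)
      ((summable_remainderTerm hc hqc).mul_left c)]
  exact tsum_of_norm_bounded hgeom fun k ↦
    (norm_eq_abs _).trans_le (abs_mul_remainderTerm_sub_le hb hbc k)

end remainder

noncomputable def sigmaSq (m r b : ℝ) : ℝ :=
  2 * log ((b + r - m) * b / ((b - m) * (b + r)))

theorem sigmaSqN_eq (p m r : ℕ → ℕ) (n : ℕ) :
    sigmaSqN p m r n = sigmaSq (m n) (r n) (n - p n) := by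
  unfold sigmaSqN sigmaSq
  ring_nf

section sigma

variable {m r b : ℝ}

theorem two_mul_div_le_sigmaSq (hm : 0 ≤ m) (hmb : m < b) (hr : 0 ≤ r) :
    2 * (m * r / (b * (b + r))) ≤ sigmaSq m r b := by
  have hb : 0 < b := hm.trans_lt hmb
  have hbm : 0 < b - m := sub_pos.2 hmb
  have hbrm : 0 < b + r - m := by linarith
  have hinv : 1 - ((b + r - m) * b / ((b - m) * (b + r)))⁻¹ = m * r / ((b + r - m) * b) := by
    field_simp
    ring
  have hlog := one_sub_inv_le_log_of_pos
    (by positivity : 0 < (b + r - m) * b / ((b - m) * (b + r)))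
  rw [hinv] at hlog
  have : m * r / (b * (b + r)) ≤ m * r / ((b + r - m) * b) := by
    rw [mul_comm b]
    gcongr
    linarith
  unfold sigmaSq
  linarith

theorem mul_sq_div_sqrt_sigmaSq_le (s : ℝ) (hm : 0 < m) (hmb : m < b) (hr : 0 < r) :
    m * r * (2 * s / √(sigmaSq m r b)) ^ 2 ≤ 2 * s ^ 2 * (b * (b + r)) := by
  have hb : 0 < b := hm.trans hmb
  have hσ := two_mul_div_le_sigmaSq hm.le hmb hr.le
  have hσpos : 0 < sigmaSq m r b := lt_of_lt_of_le (by positivity) hσ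
  rw [div_pow, sq_sqrt hσpos.le, mul_div_assoc', div_le_iff₀ hσpos]
  calc m * r * (2 * s) ^ 2 = 2 * s ^ 2 * (b * (b + r)) * (2 * (m * r / (b * (b + r)))) := by
        field_simp
    _ ≤ 2 * s ^ 2 * (b * (b + r)) * sigmaSq m r b := by gcongr

end sigma

section bound

variable {m r b s x : ℝ}

theorem abs_remainder_difference_le (hm : 0 ≤ m) (hb : 0 < b) (hr : 0 ≤ r)
    (hx : m * r * x ^ 2 ≤ 2 * s ^ 2 * (b * (b + r))) (hq : |x| / b < 1) :
    |-(m * (b + r) / 2) * remainderR x (b + r) + m * b / 2 * remainderR x b|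
      ≤ s ^ 2 * (|x| / b / (1 - |x| / b)) := by
  have hc : 0 < b + r := by linarith
  have hscale : m / 2 * (r * b / (b + r)) * (|x| / b) ^ 2 ≤ s ^ 2 := by
    rw [div_pow, sq_abs]
    calc m / 2 * (r * b / (b + r)) * (x ^ 2 / b ^ 2)
        = m * r * x ^ 2 / (2 * (b * (b + r))) := by field_simp
      _ ≤ s ^ 2 := by rw [div_le_iff₀ (by positivity)]; linarith
  have hdiff := abs_mul_remainderR_sub_le hb (le_add_of_nonneg_right hr) hq
  rw [add_sub_cancel_left] at hdiff
  calc |-(m * (b + r) / 2) * remainderR x (b + r) + m * b / 2 * remainderR x b|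
      = m / 2 * |b * remainderR x b - (b + r) * remainderR x (b + r)| := by
        rw [← abs_of_nonneg (by positivity : 0 ≤ m / 2), ← abs_mul]
        ring_nf
    _ ≤ m / 2 * (r * b / (b + r) * ((|x| / b) ^ 3 / (1 - |x| / b))) := by gcongr
    _ = m / 2 * (r * b / (b + r)) * (|x| / b) ^ 2 * (|x| / b / (1 - |x| / b)) := by ring
    _ ≤ s ^ 2 * (|x| / b / (1 - |x| / b)) := by gcongr

theorem abs_div_le_sqrt (hm : 1 ≤ m) (hb : 0 < b) (hr : 0 < r)
    (hx : m * r * x ^ 2 ≤ 2 * s ^ 2 * (b * (b + r))) :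
    |x| / b ≤ √(2 * s ^ 2 * (r⁻¹ + b⁻¹)) := by
  refine le_sqrt_of_sq_le ?_
  rw [div_pow, sq_abs, div_le_iff₀ (by positivity)]
  calc x ^ 2 ≤ m * r * x ^ 2 / r := by
        rw [mul_div_right_comm, mul_div_cancel_right₀ _ hr.ne']
        exact le_mul_of_one_le_left (sq_nonneg x) hm
    _ ≤ 2 * s ^ 2 * (b * (b + r)) / r := by gcongr
    _ = 2 * s ^ 2 * (r⁻¹ + b⁻¹) * b ^ 2 := by field_simp

end bound

theorem mul_mul_sq_mul_hN_le {p m r : ℕ → ℕ} (s : ℝ) {n : ℕ} (hm : 0 < m n)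
    (hpm : p n + m n < n) (hr : 0 < r n) :
    m n * r n * (n * hN p m r s n) ^ 2 ≤ 2 * s ^ 2 * ((n - p n) * ((n - p n) + r n)) := by
  have hmb : (m n : ℝ) < n - p n := by
    rw [lt_sub_iff_add_lt']
    exact_mod_cast hpm
  have hn : (n : ℝ) ≠ 0 := Nat.cast_ne_zero.2 (Nat.ne_zero_of_lt hpm)
  rw [hN, sigmaSqN_eq, ← mul_div_assoc, mul_div_mul_left _ _ hn]
  exact mul_sq_div_sqrt_sigmaSq_le s (by exact_mod_cast hm) hmb (by exact_mod_cast hr)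

theorem remainder_difference_vanishes_general
    (p m r : ℕ → ℕ) (s : ℝ)
    (h : ∀ᶠ n in atTop, 1 ≤ m n ∧ m n ≤ r n ∧ r n ≤ p n ∧ p n + m n < n)
    (hnp : Tendsto (fun (n : ℕ) => (n : ℝ) - p n) atTop atTop)
    (hr : Tendsto (fun (n : ℕ) => (r n : ℝ)) atTop atTop) :
    Tendsto (fun (n : ℕ) =>
        -((m n : ℝ) * ((n : ℝ) + r n - p n) / 2) *
            remainderR ((n : ℝ) * hN p m r s n) ((n : ℝ) + r n - p n)
          + ((m n : ℝ) * ((n : ℝ) - p n) / 2) *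
            remainderR ((n : ℝ) * hN p m r s n) ((n : ℝ) - p n))
      atTop (nhds 0) := by
  set x : ℕ → ℝ := fun n ↦ n * hN p m r s n
  set b : ℕ → ℝ := fun n ↦ n - p n
  have hsize : ∀ᶠ n in atTop, 1 ≤ (m n : ℝ) ∧ (m n : ℝ) < b n ∧ 0 < (r n : ℝ) ∧
      m n * r n * x n ^ 2 ≤ 2 * s ^ 2 * (b n * (b n + r n)) := by
    filter_upwards [h, hr.eventually_gt_atTop 0] with n hn hr0
    obtain ⟨hm, -, -, hpm⟩ := hn
    have hmb : (m n : ℝ) < b n := by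
      simp only [b, lt_sub_iff_add_lt']
      exact_mod_cast hpm
    exact ⟨by exact_mod_cast hm, hmb, hr0, mul_mul_sq_mul_hN_le s hm hpm (by exact_mod_cast hr0)⟩
  have hq : Tendsto (fun n ↦ |x n| / b n) atTop (nhds 0) := by
    have hsqrt : Tendsto (fun n ↦ √(2 * s ^ 2 * ((r n : ℝ)⁻¹ + (b n)⁻¹))) atTop (nhds 0) := by
      simpa using ((hr.inv_tendsto_atTop.add hnp.inv_tendsto_atTop).const_mul (2 * s ^ 2)).sqrt
    refine squeeze_zero' ?_ ?_ hsqrt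
    · filter_upwards [hsize] with n hn
      exact div_nonneg (abs_nonneg _) (by linarith [hn.1, hn.2.1])
    · filter_upwards [hsize] with n hn
      obtain ⟨hm, hmb, hr0, hxn⟩ := hn
      exact abs_div_le_sqrt hm (by linarith) hr0 hxn
  have hbound : Tendsto (fun n ↦ s ^ 2 * (|x n| / b n / (1 - |x n| / b n))) atTop (nhds 0) := by
    simpa using (hq.div (tendsto_const_nhds.sub hq) (by norm_num)).const_mul (s ^ 2)
  refine squeeze_zero_norm' ?_ hbound
  filter_upwards [hsize, hq.eventually_lt_const one_pos] with n hn hq1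
  obtain ⟨hm, hmb, hr0, hxn⟩ := hn
  rw [norm_eq_abs, show (n : ℝ) + r n - p n = b n + r n by simp only [b]; ring]
  exact abs_remainder_difference_le (by linarith) (by linarith) hr0.le hxn hq1

/-- Lemma 6: with `n > p + m`, `p ≥ r ≥ m`, `n − p → ∞`, `r → ∞`, `m/(n−p) → 0` and
`m/(n+r−p) → 0`, the remainders satisfy
`−(m(n+r−p)/2)·R_{n,1} + (m(n−p)/2)·R_{n,2} → 0`. -/
theorem remainder_difference_vanishes
    (p m r : ℕ → ℕ) (s : ℝ)
    (h : ∀ᶠ n in atTop, 1 ≤ m n ∧ m n ≤ r n ∧ r n ≤ p n ∧ p n + m n < n)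
    (hnp : Tendsto (fun (n : ℕ) => (n : ℝ) - p n) atTop atTop)
    (hr : Tendsto (fun (n : ℕ) => (r n : ℝ)) atTop atTop)
    (hm1 : Tendsto (fun (n : ℕ) => (m n : ℝ) / ((n : ℝ) - p n)) atTop (nhds 0))
    (hm2 : Tendsto (fun (n : ℕ) => (m n : ℝ) / ((n : ℝ) + r n - p n)) atTop (nhds 0)) :
    Tendsto (fun (n : ℕ) =>
        -((m n : ℝ) * ((n : ℝ) + r n - p n) / 2) *
            remainderR ((n : ℝ) * hN p m r s n) ((n : ℝ) + r n - p n)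
          + ((m n : ℝ) * ((n : ℝ) - p n) / 2) *
            remainderR ((n : ℝ) * hN p m r s n) ((n : ℝ) - p n))
      atTop (nhds 0) :=
  remainder_difference_vanishes_general p m r s h hnp hr
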